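/- arXiv:2403.00471 — 9 statements merged into one kernel-verified Lean document; each statement's English description precedes it below -/
import Mathlib

section
/- The constant paths π(t) = 1, w(t) = (ε−1)/ε, i(t) = (1−β)/β, Y(t) = 1/(1+γ) satisfy, for every t ∈ ℕ, all three equilibrium equations: the Rotemberg Phillips curve (π(t)−1)·π(t) = (ε/φ)·(w(t) − (ε−1)/ε) + β·(Y(t+1)/Y(t))·(π(t+1)−1)·π(t+1), the Taylor rule i(t+1) = r* + θ·(π(t)−1) with r* := 1/β − 1, and the aggregate Euler equation w(t+1) = β·((1+i(t+1))/π(t+1))·w(t). (This is the aggregate part of Proposition 1: the economy is in steady state with unit gross inflation, wage (ε−1)/ε, nominal rate (1−β)/β and output 1/(1+γ) from period 1 onward.) -/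
theorem stmt_0_general (β ε φ γ θ : ℝ)
    (hβ0 : 0 < β)
    (π w i Y : ℕ → ℝ)
    (hπ : ∀ t, π t = 1)
    (hw : ∀ t, w t = (ε - 1) / ε)
    (hi : ∀ t, i t = (1 - β) / β)
    (hY : ∀ t, Y t = 1 / (1 + γ)) :
    ∀ t : ℕ,
      (π t - 1) * π t
          = (ε / φ) * (w t - (ε - 1) / ε)
            + β * (Y (t + 1) / Y t) * ((π (t + 1) - 1) * π (t + 1)) ∧
      i (t + 1) = (1 / β - 1) + θ * (π t - 1) ∧
      w (t + 1) = β * ((1 + i (t + 1)) / π (t + 1)) * w t := by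
  intro t
  have hr : (1 - β) / β = 1 / β - 1 := (div_sub_one hβ0.ne').symm
  simp only [hπ, hw, hi, hY, hr]
  refine ⟨by ring, by ring, ?_⟩
  rw [add_sub_cancel, div_one, mul_one_div_cancel hβ0.ne', one_mul]

/-- Proposition 1 (aggregate part): the constant paths π(t)=1, w(t)=(ε−1)/ε,
i(t)=(1−β)/β, Y(t)=1/(1+γ) satisfy the Phillips curve, the Taylor rule with
intercept r* = 1/β − 1, and the aggregate Euler equation, for every t. -/
theorem stmt_0 (β ε φ γ θ : ℝ)
    (hβ0 : 0 < β) (hβ1 : β < 1) (hε : 1 < ε) (hφ : 0 < φ) (hγ : 0 < γ)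
    (π w i Y : ℕ → ℝ)
    (hπ : ∀ t, π t = 1)
    (hw : ∀ t, w t = (ε - 1) / ε)
    (hi : ∀ t, i t = (1 - β) / β)
    (hY : ∀ t, Y t = 1 / (1 + γ)) :
    ∀ t : ℕ,
      (π t - 1) * π t
          = (ε / φ) * (w t - (ε - 1) / ε)
            + β * (Y (t + 1) / Y t) * ((π (t + 1) - 1) * π (t + 1)) ∧
      i (t + 1) = (1 / β - 1) + θ * (π t - 1) ∧
      w (t + 1) = β * ((1 + i (t + 1)) / π (t + 1)) * w t :=
  stmt_0_general β ε φ γ θ hβ0 π w i Y hπ hw hi hY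
end

section
/- The household steady-state policies of Proposition 1 are verified: with S := (iss/(1+iss))·((1+i₁)·b₀ − z·τ₁), c := (1/(1+γ))·(w·z + S), N := (1/(1+γ))·(1/(w·z))·(w·z − γ·S), and b₁ := ((1+i₁)·b₀ − z·τ₁)/(1+iss), one has (i) the intratemporal labor-supply first-order condition w·z·(1−N) = γ·c, and (ii) the stationary budget constraint c = w·z·N + iss·b₁. -/
/-! Both identities are pure algebra in the steady-state saving `S`: the labor choice `N` is built
so that `w z (1 - N) = γ c`, consumption exceeds labor income by exactly `S`, and `S` is the
interest `iss * b₁` on the steady-state bond holding. -/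

section HouseholdPolicies

variable {y γ S : ℝ}

theorem labor_foc_of_policies (hy : y ≠ 0) (hγ : 1 + γ ≠ 0) :
    y * (1 - 1 / (1 + γ) * (1 / y) * (y - γ * S)) = γ * (1 / (1 + γ) * (y + S)) := by
  field_simp
  ring

theorem consumption_eq_labor_income_add_saving (hy : y ≠ 0) (hγ : 1 + γ ≠ 0) :
    1 / (1 + γ) * (y + S) = y * (1 / (1 + γ) * (1 / y) * (y - γ * S)) + S := by
  field_simp
  ring

end HouseholdPolicies

theorem stmt_2_general (γ w z b₀ i₁ τ₁ : ℝ)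
    (hγ : 0 < γ) (hw : 0 < w) (hz : 0 < z)
    (iss S c N b₁ : ℝ)
    (hS : S = (iss / (1 + iss)) * ((1 + i₁) * b₀ - z * τ₁))
    (hc : c = (1 / (1 + γ)) * (w * z + S))
    (hN : N = (1 / (1 + γ)) * (1 / (w * z)) * (w * z - γ * S))
    (hb : b₁ = ((1 + i₁) * b₀ - z * τ₁) / (1 + iss)) :
    w * z * (1 - N) = γ * c ∧ c = w * z * N + iss * b₁ := by
  have hwz : w * z ≠ 0 := by positivity
  have hγ1 : 1 + γ ≠ 0 := by positivity
  have hsaving : iss * b₁ = S := by rw [hb, hS]; ring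
  subst hc hN
  exact ⟨labor_foc_of_policies hwz hγ1,
    hsaving ▸ consumption_eq_labor_income_add_saving hwz hγ1⟩

/-- Verification of the household steady-state policies of Proposition 1:
the intratemporal labor-supply FOC and the stationary budget constraint hold. -/
theorem stmt_2 (β γ w z b₀ i₁ τ₁ : ℝ)
    (hβ0 : 0 < β) (hβ1 : β < 1) (hγ : 0 < γ) (hw : 0 < w) (hz : 0 < z)
    (iss S c N b₁ : ℝ)
    (hiss : iss = (1 - β) / β)
    (hS : S = (iss / (1 + iss)) * ((1 + i₁) * b₀ - z * τ₁))
    (hc : c = (1 / (1 + γ)) * (w * z + S))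
    (hN : N = (1 / (1 + γ)) * (1 / (w * z)) * (w * z - γ * S))
    (hb : b₁ = ((1 + i₁) * b₀ - z * τ₁) / (1 + iss)) :
    w * z * (1 - N) = γ * c ∧ c = w * z * N + iss * b₁ :=
  stmt_2_general γ w z b₀ i₁ τ₁ hγ hw hz iss S c N b₁ hS hc hN hb
end

section
/- For every b with 0 ≤ b < bmax there exists exactly one real r such that r > −1, Dh(b,r) > 0, Dl(b,r) > 0 and F(b,r) = 0; moreover this unique natural rate satisfies r < iss. (Existence, uniqueness and an upper bound for the natural rate of interest implicitly defined by the paper's equation (14).) -/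
/-- High-productivity stationary consumption denominator:
Dh(b,r) = w·zh + (1−β)·(1+r)·b·(1−zh) with w = (ε−1)/ε. -/
noncomputable def Dh (β ε zh : ℝ) (b r : ℝ) : ℝ :=
  ((ε - 1) / ε) * zh + (1 - β) * (1 + r) * b * (1 - zh)

/-- Low-productivity stationary consumption denominator:
Dl(b,r) = w·zl + (1−β)·(1+r)·b·(1−zl) with w = (ε−1)/ε. -/
noncomputable def Dl (β ε zl : ℝ) (b r : ℝ) : ℝ :=
  ((ε - 1) / ε) * zl + (1 - β) * (1 + r) * b * (1 - zl)

/-- Natural-rate equation residual: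
F(b,r) = β·ρ·(1+r)/Dh(b,r) + β·(1−ρ)·(1+r)/Dl(b,r) − ε/(ε−1). -/
noncomputable def F (β ε ρ zh zl : ℝ) (b r : ℝ) : ℝ :=
  β * ρ * (1 + r) / Dh β ε zh b r
    + β * (1 - ρ) * (1 + r) / Dl β ε zl b r
    - ε / (ε - 1)

/-!
Write `w = (ε-1)/ε` and `x = 1 + r`. Each summand of `F b` has the form `x / (a + d x)` with
`a > 0`, so `F b` is strictly increasing wherever both denominators are positive; on `[-1, iss]`
they are. At `r = -1` the residual is `-ε/(ε-1) < 0`. At `r = iss` we have `β (1 + r) = 1`, the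
denominators `A = Dh`, `B = Dl` satisfy `ρ A + (1-ρ) B = w` (because `ρ zh + (1-ρ) zl = 1`) and
`A > B` (because `b < bmax`), so strict convexity of `x ↦ x⁻¹` gives
`F = ρ/A + (1-ρ)/B - w⁻¹ > 0`. The intermediate value theorem then yields the root, and strict
monotonicity gives its uniqueness and the bound `r < iss`.
-/

open Set

lemma div_add_mul_lt_div_add_mul {a d x y : ℝ} (ha : 0 < a) (hx : 0 < a + d * x)
    (hy : 0 < a + d * y) (hxy : x < y) : x / (a + d * x) < y / (a + d * y) := by
  rw [div_lt_div_iff₀ hx hy]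
  nlinarith [mul_pos ha (sub_pos.2 hxy)]

lemma inv_lt_convex_comb_inv {ρ A B : ℝ} (hρ0 : 0 < ρ) (hρ1 : ρ < 1) (hA : 0 < A) (hB : 0 < B)
    (hAB : A ≠ B) : (ρ * A + (1 - ρ) * B)⁻¹ < ρ / A + (1 - ρ) / B := by
  have h := (strictConvexOn_zpow (m := -1) (by norm_num) (by norm_num)).2
    (mem_Ioi.2 hA) (mem_Ioi.2 hB) hAB hρ0 (sub_pos.2 hρ1) (by ring)
  simpa only [zpow_neg_one, smul_eq_mul, div_eq_mul_inv] using h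

section NaturalRate

variable {β ε ρ zh zl b : ℝ}

lemma continuous_Dh : Continuous (Dh β ε zh b) := by
  unfold Dh; fun_prop

lemma continuous_Dl : Continuous (Dl β ε zl b) := by
  unfold Dl; fun_prop

lemma Dh_antitone (hβ1 : β ≤ 1) (hzh : 1 ≤ zh) (hb0 : 0 ≤ b) : Antitone (Dh β ε zh b) := by
  intro r s hrs
  have hslope : (1 - β) * b * (1 - zh) ≤ 0 :=
    mul_nonpos_of_nonneg_of_nonpos (mul_nonneg (by linarith) hb0) (by linarith)
  unfold Dh
  nlinarith

lemma Dl_pos (hβ1 : β ≤ 1) (hε : 1 < ε) (hzl0 : 0 < zl) (hzl1 : zl ≤ 1) (hb0 : 0 ≤ b)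
    {r : ℝ} (hr : -1 ≤ r) : 0 < Dl β ε zl b r := by
  have hw : 0 < (ε - 1) / ε := div_pos (by linarith) (by linarith)
  have hslope : 0 ≤ (1 - β) * (1 + r) * b * (1 - zl) := by
    have : 0 ≤ 1 - β := by linarith
    have : 0 ≤ 1 + r := by linarith
    have : 0 ≤ 1 - zl := by linarith
    positivity
  unfold Dl
  nlinarith [mul_pos hw hzl0]

lemma F_strictMonoOn (hβ0 : 0 < β) (hε : 1 < ε) (hρ0 : 0 < ρ) (hρ1 : ρ < 1) (hzl0 : 0 < zl)
    (hzh0 : 0 < zh) :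
    StrictMonoOn (F β ε ρ zh zl b) {r | 0 < Dh β ε zh b r ∧ 0 < Dl β ε zl b r} := by
  rintro r ⟨hDhr, hDlr⟩ s ⟨hDhs, hDls⟩ hrs
  have hw : 0 < (ε - 1) / ε := div_pos (by linarith) (by linarith)
  have hDh : ∀ t, Dh β ε zh b t = (ε - 1) / ε * zh + (1 - β) * b * (1 - zh) * (1 + t) := by
    intro t; unfold Dh; ring
  have hDl : ∀ t, Dl β ε zl b t = (ε - 1) / ε * zl + (1 - β) * b * (1 - zl) * (1 + t) := by
    intro t; unfold Dl; ring
  rw [hDh] at hDhr hDhs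
  rw [hDl] at hDlr hDls
  have hhigh := div_add_mul_lt_div_add_mul (mul_pos hw hzh0) hDhr hDhs (by linarith)
  have hlow := div_add_mul_lt_div_add_mul (mul_pos hw hzl0) hDlr hDls (by linarith)
  have hβρ : 0 < β * ρ := mul_pos hβ0 hρ0
  have hβρ' : 0 < β * (1 - ρ) := mul_pos hβ0 (by linarith)
  simp only [F, hDh, hDl, mul_div_assoc]
  linarith [mul_lt_mul_of_pos_left hhigh hβρ, mul_lt_mul_of_pos_left hlow hβρ']

lemma F_neg_one_neg (hε : 1 < ε) : F β ε ρ zh zl b (-1) < 0 := by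
  have : 0 < ε / (ε - 1) := div_pos (by linarith) (by linarith)
  simp only [F]
  norm_num
  linarith

lemma continuousOn_F {s : Set ℝ} (hpos : ∀ r ∈ s, 0 < Dh β ε zh b r ∧ 0 < Dl β ε zl b r) :
    ContinuousOn (F β ε ρ zh zl b) s := by
  have hnum : ∀ c : ℝ, ContinuousOn (fun r : ℝ => c * (1 + r)) s := fun c => by fun_prop
  refine (ContinuousOn.add ?_ ?_).sub continuousOn_const
  · exact (hnum _).div continuous_Dh.continuousOn fun r hr => (hpos r hr).1.ne'
  · exact (hnum _).div continuous_Dl.continuousOn fun r hr => (hpos r hr).2.ne'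

lemma weighted_Dh_add_Dl (hmean : ρ * zh + (1 - ρ) * zl = 1) (r : ℝ) :
    ρ * Dh β ε zh b r + (1 - ρ) * Dl β ε zl b r = (ε - 1) / ε := by
  unfold Dh Dl
  linear_combination ((ε - 1) / ε - (1 - β) * (1 + r) * b) * hmean

lemma Dl_lt_Dh_iss (hβ0 : 0 < β) (hβ1 : β < 1) (hz : zl < zh)
    (hb : b < ((ε - 1) / ε) * (β / (1 - β))) :
    Dl β ε zl b ((1 - β) / β) < Dh β ε zh b ((1 - β) / β) := by
  have hdebt : (1 - β) / β * b < (ε - 1) / ε := by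
    rw [div_mul_eq_mul_div, div_lt_iff₀ hβ0]
    rw [mul_div_assoc', lt_div_iff₀ (by linarith)] at hb
    linarith
  have hgap : Dh β ε zh b ((1 - β) / β) - Dl β ε zl b ((1 - β) / β)
      = ((ε - 1) / ε - (1 - β) / β * b) * (zh - zl) := by
    unfold Dh Dl; field_simp; ring
  nlinarith [mul_pos (sub_pos.2 hdebt) (sub_pos.2 hz)]

lemma F_iss_pos (hβ0 : 0 < β) (hβ1 : β < 1) (hε : 1 < ε) (hρ0 : 0 < ρ) (hρ1 : ρ < 1)
    (hzl0 : 0 < zl) (hzl1 : zl ≤ 1) (hz : zl < zh) (hmean : ρ * zh + (1 - ρ) * zl = 1)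
    (hb0 : 0 ≤ b) (hb : b < ((ε - 1) / ε) * (β / (1 - β))) :
    0 < F β ε ρ zh zl b ((1 - β) / β) := by
  have hiss : -1 ≤ (1 - β) / β := by
    have := div_pos (sub_pos.2 hβ1) hβ0; linarith
  have hB0 := Dl_pos hβ1.le hε hzl0 hzl1 hb0 hiss
  have hBA := Dl_lt_Dh_iss hβ0 hβ1 hz hb
  have hβ : β * (1 + (1 - β) / β) = 1 := by field_simp; ring
  have hhigh : β * ρ * (1 + (1 - β) / β) = ρ := by rw [mul_right_comm, hβ, one_mul]
  have hlow : β * (1 - ρ) * (1 + (1 - β) / β) = 1 - ρ := by rw [mul_right_comm, hβ, one_mul]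
  rw [F, hhigh, hlow, ← inv_div (ε - 1) ε, ← weighted_Dh_add_Dl hmean, sub_pos]
  exact inv_lt_convex_comb_inv hρ0 hρ1 (hB0.trans hBA) hB0 hBA.ne'

end NaturalRate

/-- Existence, uniqueness and an upper bound for the natural rate of interest:
for every debt level 0 ≤ b < bmax there is exactly one r > −1 with positive
denominators solving F(b,r) = 0, and any such r lies strictly below
iss = (1−β)/β. -/
theorem stmt_6 (β ε ρ zh zl : ℝ)
    (hβ0 : 0 < β) (hβ1 : β < 1) (hε : 1 < ε)
    (hρ0 : 0 < ρ) (hρ1 : ρ < 1)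
    (hzl0 : 0 < zl) (hzl1 : zl < 1) (hzh : 1 < zh)
    (hmean : ρ * zh + (1 - ρ) * zl = 1) :
    ∀ b : ℝ, 0 ≤ b → b < ((ε - 1) / ε) * (β / (1 - β)) →
      (∃! r : ℝ, r > -1 ∧ Dh β ε zh b r > 0 ∧ Dl β ε zl b r > 0 ∧
          F β ε ρ zh zl b r = 0) ∧
      (∀ r : ℝ, (r > -1 ∧ Dh β ε zh b r > 0 ∧ Dl β ε zl b r > 0 ∧
          F β ε ρ zh zl b r = 0) → r < (1 - β) / β) := by
  intro b hb0 hb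
  have hz : zl < zh := hzl1.trans hzh
  have hiss : -1 < (1 - β) / β := by
    have := div_pos (sub_pos.2 hβ1) hβ0; linarith
  have hpos : ∀ r ∈ Icc (-1) ((1 - β) / β), 0 < Dh β ε zh b r ∧ 0 < Dl β ε zl b r :=
    fun r hr => ⟨((Dl_pos hβ1.le hε hzl0 hzl1.le hb0 hiss.le).trans
      (Dl_lt_Dh_iss hβ0 hβ1 hz hb)).trans_le (Dh_antitone hβ1.le hzh.le hb0 hr.2),
      Dl_pos hβ1.le hε hzl0 hzl1.le hb0 hr.1⟩
  have hF_iss := F_iss_pos hβ0 hβ1 hε hρ0 hρ1 hzl0 hzl1.le hz hmean hb0 hb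
  have hmono := F_strictMonoOn (b := b) hβ0 hε hρ0 hρ1 hzl0 (hzl0.trans hz)
  obtain ⟨r, hr, hFr⟩ := intermediate_value_Ioo hiss.le (continuousOn_F hpos)
    ⟨F_neg_one_neg hε, hF_iss⟩
  obtain ⟨hDhr, hDlr⟩ := hpos r (Ioo_subset_Icc_self hr)
  refine ⟨⟨r, ⟨hr.1, hDhr, hDlr, hFr⟩, ?_⟩, ?_⟩
  · rintro s ⟨-, hDhs, hDls, hFs⟩
    exact hmono.injOn ⟨hDhs, hDls⟩ ⟨hDhr, hDlr⟩ (hFs.trans hFr.symm)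
  · rintro s ⟨-, hDhs, hDls, hFs⟩
    by_contra! hle
    have := hmono.monotoneOn (hpos _ (right_mem_Icc.2 hiss.le)) ⟨hDhs, hDls⟩ hle
    linarith
end

section
/- F is strictly increasing in the interest rate: for any b ≥ 0 and any −1 ≤ r₁ < r₂ such that Dh(b,r₁) > 0, Dh(b,r₂) > 0, Dl(b,r₁) > 0 and Dl(b,r₂) > 0, one has F(b,r₁) < F(b,r₂). (The positivity of ∂F/∂r established in the proof of Proposition 3.) -/
/- Each summand of F is a Möbius map u ↦ c u / (a + k u) of u = 1 + r, with determinant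
c a > 0; such a map is increasing wherever its denominator keeps a positive sign, whatever
the signs of u and k. -/

theorem mul_div_add_mul_lt_mul_div_add_mul {a c k u₁ u₂ : ℝ} (ha : 0 < a) (hc : 0 < c)
    (hu : u₁ < u₂) (h₁ : 0 < a + k * u₁) (h₂ : 0 < a + k * u₂) :
    c * u₁ / (a + k * u₁) < c * u₂ / (a + k * u₂) := by
  rw [div_lt_div_iff₀ h₁ h₂]
  have hdet : c * u₂ * (a + k * u₁) - c * u₁ * (a + k * u₂) = c * a * (u₂ - u₁) := by ring
  linarith [mul_pos (mul_pos hc ha) (sub_pos.2 hu)]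

theorem Dh_eq_add_mul (β ε z b r : ℝ) :
    Dh β ε z b r = (ε - 1) / ε * z + (1 - β) * b * (1 - z) * (1 + r) := by
  unfold Dh
  ring

theorem mul_one_add_div_Dh_lt {β ε z b c r₁ r₂ : ℝ} (hε : 1 < ε) (hz : 0 < z) (hc : 0 < c)
    (hr : r₁ < r₂) (h₁ : 0 < Dh β ε z b r₁) (h₂ : 0 < Dh β ε z b r₂) :
    c * (1 + r₁) / Dh β ε z b r₁ < c * (1 + r₂) / Dh β ε z b r₂ := by
  have ha : 0 < (ε - 1) / ε * z := mul_pos (div_pos (by linarith) (by linarith)) hz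
  simp only [Dh_eq_add_mul] at h₁ h₂ ⊢
  exact mul_div_add_mul_lt_mul_div_add_mul ha hc (by linarith) h₁ h₂

theorem stmt_10_general (β ε ρ zh zl : ℝ)
    (hβ0 : 0 < β) (hε : 1 < ε)
    (hρ0 : 0 < ρ) (hρ1 : ρ < 1)
    (hzl0 : 0 < zl) (hzh : 1 < zh) :
    ∀ b r₁ r₂ : ℝ, 0 ≤ b → -1 ≤ r₁ → r₁ < r₂ →
      Dh β ε zh b r₁ > 0 → Dh β ε zh b r₂ > 0 →
      Dl β ε zl b r₁ > 0 → Dl β ε zl b r₂ > 0 →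
      F β ε ρ zh zl b r₁ < F β ε ρ zh zl b r₂ := by
  intro b r₁ r₂ _ _ hr hDh₁ hDh₂ hDl₁ hDl₂
  have high := mul_one_add_div_Dh_lt hε (by linarith) (mul_pos hβ0 hρ0) hr hDh₁ hDh₂
  -- Dl and Dh have the same defining formula
  have low : β * (1 - ρ) * (1 + r₁) / Dl β ε zl b r₁ < β * (1 - ρ) * (1 + r₂) / Dl β ε zl b r₂ :=
    mul_one_add_div_Dh_lt hε hzl0 (mul_pos hβ0 (by linarith)) hr hDl₁ hDl₂
  unfold F
  linarith

/-- F is strictly increasing in the interest rate (positivity of ∂F/∂r in the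
proof of Proposition 3). -/
theorem stmt_10 (β ε ρ zh zl : ℝ)
    (hβ0 : 0 < β) (hβ1 : β < 1) (hε : 1 < ε)
    (hρ0 : 0 < ρ) (hρ1 : ρ < 1)
    (hzl0 : 0 < zl) (hzl1 : zl < 1) (hzh : 1 < zh)
    (hmean : ρ * zh + (1 - ρ) * zl = 1) :
    ∀ b r₁ r₂ : ℝ, 0 ≤ b → -1 ≤ r₁ → r₁ < r₂ →
      Dh β ε zh b r₁ > 0 → Dh β ε zh b r₂ > 0 →
      Dl β ε zl b r₁ > 0 → Dl β ε zl b r₂ > 0 →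
      F β ε ρ zh zl b r₁ < F β ε ρ zh zl b r₂ :=
  stmt_10_general β ε ρ zh zl hβ0 hε hρ0 hρ1 hzl0 hzh
end

section
/- Every natural rate below the debt bound lies below the complete-markets rate, and high-productivity stationary consumption exceeds low-productivity stationary consumption: if 0 ≤ b < bmax, r > −1, Dh(b,r) > 0, Dl(b,r) > 0 and F(b,r) = 0, then r < iss and w − (1−β)·(1+r)·b > 0 (equivalently Dh(b,r) > Dl(b,r)). (Conditions (ae:c_cond) and (ae:c_cond2) established in the proof of Proposition 3.) -/
/-!
The mean-productivity normalisation gives `ρ·Dh + (1−ρ)·Dl = w`, so the natural-rate equation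
says that `β(1+r)` is the reciprocal of `(ρ/Dh + (1−ρ)/Dl)(ρ·Dh + (1−ρ)·Dl)`, which is at least
`1` by the weighted AM–HM inequality. Hence `β(1+r) ≤ 1`, and together with `0 ≤ b < bmax` this
gives `w − (1−β)(1+r)b > 0`. Since `Dh − Dl = (w − (1−β)(1+r)b)(zh − zl)`, the two denominators
differ, so the AM–HM inequality is strict and `β(1+r) < 1`, i.e. `r < iss`.
-/

theorem weighted_inv_mean_mul_mean_eq {ρ a c : ℝ} (ha : a ≠ 0) (hc : c ≠ 0) :
    (ρ / a + (1 - ρ) / c) * (ρ * a + (1 - ρ) * c) = 1 + ρ * (1 - ρ) * (a - c) ^ 2 / (a * c) := by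
  field_simp
  ring

theorem one_le_weighted_inv_mean_mul_mean {ρ a c : ℝ} (hρ0 : 0 ≤ ρ) (hρ1 : ρ ≤ 1)
    (ha : 0 < a) (hc : 0 < c) :
    1 ≤ (ρ / a + (1 - ρ) / c) * (ρ * a + (1 - ρ) * c) := by
  rw [weighted_inv_mean_mul_mean_eq ha.ne' hc.ne', le_add_iff_nonneg_right]
  have : 0 ≤ 1 - ρ := sub_nonneg.mpr hρ1
  positivity

theorem one_lt_weighted_inv_mean_mul_mean {ρ a c : ℝ} (hρ0 : 0 < ρ) (hρ1 : ρ < 1)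
    (ha : 0 < a) (hc : 0 < c) (hac : a ≠ c) :
    1 < (ρ / a + (1 - ρ) / c) * (ρ * a + (1 - ρ) * c) := by
  rw [weighted_inv_mean_mul_mean_eq ha.ne' hc.ne', lt_add_iff_pos_right]
  have : 0 < 1 - ρ := sub_pos.mpr hρ1
  have : 0 < (a - c) ^ 2 := sq_pos_of_ne_zero (sub_ne_zero.mpr hac)
  positivity

section NaturalRate

variable {β ε ρ zh zl : ℝ} {b r : ℝ}

theorem Dh_sub_Dl :
    Dh β ε zh b r - Dl β ε zl b r = ((ε - 1) / ε - (1 - β) * (1 + r) * b) * (zh - zl) := by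
  unfold Dh Dl
  ring

theorem mean_Dh_Dl (hmean : ρ * zh + (1 - ρ) * zl = 1) :
    ρ * Dh β ε zh b r + (1 - ρ) * Dl β ε zl b r = (ε - 1) / ε := by
  unfold Dh Dl
  linear_combination ((ε - 1) / ε - (1 - β) * (1 + r) * b) * hmean

theorem mul_weighted_inv_mean_mul_mean_eq_one_of_F_eq_zero (hmean : ρ * zh + (1 - ρ) * zl = 1)
    (hw : (ε - 1) / ε ≠ 0) (hF : F β ε ρ zh zl b r = 0) :
    β * (1 + r) * ((ρ / Dh β ε zh b r + (1 - ρ) / Dl β ε zl b r)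
      * (ρ * Dh β ε zh b r + (1 - ρ) * Dl β ε zl b r)) = 1 := by
  have hrate :
      β * (1 + r) * (ρ / Dh β ε zh b r + (1 - ρ) / Dl β ε zl b r) = ((ε - 1) / ε)⁻¹ := by
    rw [inv_div, ← sub_eq_zero, ← hF, F]
    ring
  rw [← mul_assoc, hrate, mean_Dh_Dl hmean, inv_mul_cancel₀ hw]

theorem wage_sub_pos_of_lt_bound {w : ℝ} (hβ0 : 0 < β) (hβ1 : β < 1) (hb : 0 ≤ b)
    (hbmax : b < w * (β / (1 - β))) (hβr : β * (1 + r) ≤ 1) :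
    0 < w - (1 - β) * (1 + r) * b := by
  have h1β : 0 < 1 - β := sub_pos.mpr hβ1
  have hbound : (1 - β) * b < w * β := by
    rwa [mul_div_assoc', lt_div_iff₀ h1β, mul_comm b] at hbmax
  have hdiscount : β * (1 + r) * ((1 - β) * b) ≤ (1 - β) * b :=
    mul_le_of_le_one_left (by positivity) hβr
  have : 0 < β * (w - (1 - β) * (1 + r) * b) := by linarith
  exact pos_of_mul_pos_right this hβ0.le

end NaturalRate

theorem stmt_12_general (β ε ρ zh zl : ℝ)
    (hβ0 : 0 < β) (hβ1 : β < 1)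
    (hρ0 : 0 < ρ) (hρ1 : ρ < 1)
    (hzl1 : zl < 1) (hzh : 1 < zh)
    (hmean : ρ * zh + (1 - ρ) * zl = 1) :
    ∀ b r : ℝ, 0 ≤ b → b < ((ε - 1) / ε) * (β / (1 - β)) →
      r > -1 → Dh β ε zh b r > 0 → Dl β ε zl b r > 0 →
      F β ε ρ zh zl b r = 0 →
      r < (1 - β) / β ∧
      (ε - 1) / ε - (1 - β) * (1 + r) * b > 0 ∧
      Dh β ε zh b r > Dl β ε zl b r := by
  intro b r hb hbmax _ hDh hDl hF
  have hw : (ε - 1) / ε ≠ 0 := by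
    rw [← mean_Dh_Dl (β := β) (b := b) (r := r) hmean]
    exact (add_pos (mul_pos hρ0 hDh) (mul_pos (sub_pos.mpr hρ1) hDl)).ne'
  have hβr :=
    eq_inv_of_mul_eq_one_left (mul_weighted_inv_mean_mul_mean_eq_one_of_F_eq_zero hmean hw hF)
  have hβr_le : β * (1 + r) ≤ 1 :=
    hβr ▸ inv_le_one_of_one_le₀ (one_le_weighted_inv_mean_mul_mean hρ0.le hρ1.le hDh hDl)
  have hwage := wage_sub_pos_of_lt_bound hβ0 hβ1 hb hbmax hβr_le
  have hDl_lt_Dh : Dl β ε zl b r < Dh β ε zh b r := by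
    rw [← sub_pos, Dh_sub_Dl]
    exact mul_pos hwage (by linarith)
  have hβr_lt : β * (1 + r) < 1 :=
    hβr ▸ inv_lt_one_of_one_lt₀ (one_lt_weighted_inv_mean_mul_mean hρ0 hρ1 hDh hDl hDl_lt_Dh.ne')
  refine ⟨?_, hwage, hDl_lt_Dh⟩
  rw [lt_div_iff₀ hβ0]
  linarith

/-- Conditions (ae:c_cond) and (ae:c_cond2) in the proof of Proposition 3:
every natural rate below the debt bound lies below the complete-markets rate,
and high-productivity stationary consumption exceeds low-productivity
stationary consumption. -/
theorem stmt_12 (β ε ρ zh zl : ℝ)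
    (hβ0 : 0 < β) (hβ1 : β < 1) (hε : 1 < ε)
    (hρ0 : 0 < ρ) (hρ1 : ρ < 1)
    (hzl0 : 0 < zl) (hzl1 : zl < 1) (hzh : 1 < zh)
    (hmean : ρ * zh + (1 - ρ) * zl = 1) :
    ∀ b r : ℝ, 0 ≤ b → b < ((ε - 1) / ε) * (β / (1 - β)) →
      r > -1 → Dh β ε zh b r > 0 → Dl β ε zl b r > 0 →
      F β ε ρ zh zl b r = 0 →
      r < (1 - β) / β ∧
      (ε - 1) / ε - (1 - β) * (1 + r) * b > 0 ∧
      Dh β ε zh b r > Dl β ε zl b r :=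
  stmt_12_general β ε ρ zh zl hβ0 hβ1 hρ0 hρ1 hzl1 hzh hmean
end

section
/- F is strictly decreasing in the government-debt level when high-productivity stationary consumption exceeds low-productivity stationary consumption: if 0 ≤ b₁ < b₂, r > −1, and (1−β)·(1+r)·b₂ < w, then F(b₂, r) < F(b₁, r). (The negativity of ∂F/∂b established in the proof of Proposition 3.) -/
set_option maxHeartbeats 1000000 in
/-- F is strictly decreasing in the government-debt level when
high-productivity stationary consumption exceeds low-productivity stationary
consumption (negativity of ∂F/∂b in the proof of Proposition 3). -/
theorem stmt_13 (β ε ρ zh zl : ℝ)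
    (hβ0 : 0 < β) (hβ1 : β < 1) (hε : 1 < ε)
    (hρ0 : 0 < ρ) (hρ1 : ρ < 1)
    (hzl0 : 0 < zl) (hzl1 : zl < 1) (hzh : 1 < zh)
    (hmean : ρ * zh + (1 - ρ) * zl = 1) :
    ∀ b₁ b₂ r : ℝ, 0 ≤ b₁ → b₁ < b₂ → r > -1 →
      (1 - β) * (1 + r) * b₂ < (ε - 1) / ε →
      F β ε ρ zh zl b₂ r < F β ε ρ zh zl b₁ r := by
  intro b₁ b₂ r hb1 hlt hr hbound
  have hε0 : (0:ℝ) < ε := by linarith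
  have hw : 0 < (ε - 1) / ε := div_pos (by linarith) hε0
  have hc : 0 < (1 - β) * (1 + r) := mul_pos (by linarith) (by linarith)
  have hcb2 : (1 - β) * (1 + r) * b₂ < (ε - 1) / ε := hbound
  have hcb1 : (1 - β) * (1 + r) * b₁ < (ε - 1) / ε := by
    have : (1 - β) * (1 + r) * b₁ ≤ (1 - β) * (1 + r) * b₂ :=
      mul_le_mul_of_nonneg_left (le_of_lt hlt) (le_of_lt hc)
    linarith
  have hb1c : 0 ≤ (1 - β) * (1 + r) * b₁ := mul_nonneg hc.le hb1
  have hb2c : 0 < (1 - β) * (1 + r) * b₂ := by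
    have : (0:ℝ) ≤ (1 - β) * (1 + r) * b₁ := hb1c
    nlinarith
  -- positivity of denominators
  have hDl1 : 0 < Dl β ε zl b₁ r := by
    unfold Dl; nlinarith
  have hDl2 : 0 < Dl β ε zl b₂ r := by
    unfold Dl; nlinarith
  have hDh1 : 0 < Dh β ε zh b₁ r := by
    unfold Dh; nlinarith
  have hDh2 : 0 < Dh β ε zh b₂ r := by
    unfold Dh; nlinarith
  -- Dh > Dl pointwise
  have hgt1 : Dl β ε zl b₁ r < Dh β ε zh b₁ r := by
    unfold Dh Dl; nlinarith
  have hgt2 : Dl β ε zl b₂ r < Dh β ε zh b₂ r := by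
    unfold Dh Dl; nlinarith
  -- common numerator
  obtain ⟨K, hK⟩ : ∃ K : ℝ, K = β * (1 + r) * ((1 - β) * (1 + r)) * (b₂ - b₁) * (ρ * (zh - 1)) :=
    ⟨_, rfl⟩
  have hK0 : 0 < K := by
    have h1r : (0:ℝ) < 1 + r := by linarith
    have hsub : (0:ℝ) < b₂ - b₁ := by linarith
    have hz : (0:ℝ) < ρ * (zh - 1) := mul_pos hρ0 (by linarith)
    rw [hK]
    exact mul_pos (mul_pos (mul_pos (mul_pos hβ0 h1r) hc) hsub) hz
  have hk : ρ * (zh - 1) = (1 - ρ) * (1 - zl) := by linear_combination hmean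
  have e1 : β * ρ * (1 + r) / Dh β ε zh b₂ r - β * ρ * (1 + r) / Dh β ε zh b₁ r
      = K / (Dh β ε zh b₁ r * Dh β ε zh b₂ r) := by
    rw [div_sub_div _ _ hDh2.ne' hDh1.ne', hK,
      div_eq_div_iff (mul_pos hDh2 hDh1).ne' (mul_pos hDh1 hDh2).ne']
    unfold Dh
    ring
  have e2 : β * (1 - ρ) * (1 + r) / Dl β ε zl b₁ r - β * (1 - ρ) * (1 + r) / Dl β ε zl b₂ r
      = K / (Dl β ε zl b₁ r * Dl β ε zl b₂ r) := by
    rw [div_sub_div _ _ hDl1.ne' hDl2.ne', hK, hk]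
    congr 1
    unfold Dl
    ring
  have hprod : Dl β ε zl b₁ r * Dl β ε zl b₂ r < Dh β ε zh b₁ r * Dh β ε zh b₂ r := by
    apply mul_lt_mul' hgt1.le hgt2 hDl2.le hDh1
  have key : K / (Dh β ε zh b₁ r * Dh β ε zh b₂ r)
      < K / (Dl β ε zl b₁ r * Dl β ε zl b₂ r) :=
    div_lt_div_of_pos_left hK0 (mul_pos hDl1 hDl2) hprod
  unfold F
  rw [← e1] at key
  rw [← e2] at key
  linarith
end

section
/- The natural rate of interest is strictly increasing in the level of government debt (Proposition 3, global form): if 0 ≤ b₁ < b₂ < bmax, and r₁, r₂ are reals with rⱼ > −1, Dh(bⱼ,rⱼ) > 0, Dl(bⱼ,rⱼ) > 0 and F(bⱼ,rⱼ) = 0 for j = 1,2, then r₁ < r₂. -/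
/-!
Write `w = (ε-1)/ε`, `x = 1 + r` and `u = (1-β) x b`, so that `Dh = denom w zh u`,
`Dl = denom w zl u` and `F = β x G(u) - 1/w` with `G = meanInv ρ w zh zl`.
Since `ρ zh + (1-ρ) zl = 1`, the `ρ`-mean of the two denominators is `w`, so by convexity of
`t ↦ 1/t` we get `G ≥ 1/w`, hence `β x ≤ 1` at a root. On `[0, w]` the function `G` is strictly
decreasing, and for fixed `b` the residual `F` is increasing in `r`. If `b₁ < b₂` and `r₂ ≤ r₁`,
then `F(b₂, r₂) ≤ F(b₂, r₁) < F(b₁, r₁) = 0`, where `β x₁ ≤ 1` and `(1-β) b₂ < β w` keep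
`(1-β) x₁ b₂` inside `[0, w]`.
-/

def denom (w z u : ℝ) : ℝ := w * z + u * (1 - z)

noncomputable def meanInv (ρ w zh zl u : ℝ) : ℝ := ρ / denom w zh u + (1 - ρ) / denom w zl u

lemma denom_pos {w z u : ℝ} (hw : 0 < w) (hz : 0 < z) (hu : 0 ≤ u) (huw : u ≤ w) :
    0 < denom w z u := by
  unfold denom
  rcases le_or_gt z 1 with hz1 | hz1
  · nlinarith [mul_pos hw hz]
  · nlinarith

lemma denom_mean {ρ zh zl : ℝ} (hmean : ρ * zh + (1 - ρ) * zl = 1) (w u : ℝ) :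
    ρ * denom w zh u + (1 - ρ) * denom w zl u = w := by
  unfold denom
  linear_combination (w - u) * hmean

lemma inv_le_meanInv {ρ zh zl w u : ℝ} (hρ0 : 0 ≤ ρ) (hρ1 : ρ ≤ 1)
    (hmean : ρ * zh + (1 - ρ) * zl = 1)
    (hh : 0 < denom w zh u) (hl : 0 < denom w zl u) :
    w⁻¹ ≤ meanInv ρ w zh zl u := by
  have := (convexOn_zpow (-1)).2 (Set.mem_Ioi.2 hh) (Set.mem_Ioi.2 hl) hρ0 (sub_nonneg.2 hρ1)
    (add_sub_cancel ρ 1)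
  simp only [smul_eq_mul, zpow_neg_one, denom_mean hmean] at this
  simpa only [meanInv, div_eq_mul_inv] using this

lemma meanInv_strictAntiOn {ρ zh zl w : ℝ} (hρ0 : 0 < ρ) (hzl0 : 0 < zl) (hzl1 : zl < 1)
    (hzh : 1 < zh) (hmean : ρ * zh + (1 - ρ) * zl = 1) (hw : 0 < w) :
    StrictAntiOn (meanInv ρ w zh zl) (Set.Icc 0 w) := by
  rintro u ⟨hu0, huw⟩ v ⟨hv0, hvw⟩ huv
  have hhu := denom_pos (z := zh) hw (by linarith) hu0 huw
  have hhv := denom_pos (z := zh) hw (by linarith) hv0 hvw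
  have hlu := denom_pos hw hzl0 hu0 huw
  have hlv := denom_pos hw hzl0 hv0 hvw
  -- by `hmean` the two weighted slopes agree, so the sign of `G v - G u` is that of
  -- `Dh u Dh v - Dl u Dl v`, and `Dh - Dl = (w - u) (zh - zl)` is positive below `w`
  have hslope : (1 - ρ) * (1 - zl) = ρ * (zh - 1) := by linear_combination -hmean
  have hh : ρ / denom w zh v - ρ / denom w zh u
      = (v - u) * (ρ * (zh - 1)) / (denom w zh u * denom w zh v) := by
    rw [div_sub_div _ _ hhv.ne' hhu.ne']
    unfold denom
    ring
  have hl : (1 - ρ) / denom w zl v - (1 - ρ) / denom w zl u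
      = -((v - u) * (ρ * (zh - 1)) / (denom w zl u * denom w zl v)) := by
    rw [div_sub_div _ _ hlv.ne' hlu.ne', ← hslope]
    unfold denom
    ring
  have hprod : denom w zl u * denom w zl v < denom w zh u * denom w zh v := by
    have hu : denom w zl u < denom w zh u := by unfold denom; nlinarith
    have hv : denom w zl v ≤ denom w zh v := by unfold denom; nlinarith
    exact mul_lt_mul hu hv hlv hhu.le
  have hk : 0 < (v - u) * (ρ * (zh - 1)) :=
    mul_pos (sub_pos.2 huv) (mul_pos hρ0 (sub_pos.2 hzh))
  have := div_lt_div_of_pos_left hk (mul_pos hlu hlv) hprod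
  unfold meanInv
  linarith

lemma div_denom_le_div_denom {w z c x y : ℝ} (hwz : 0 ≤ w * z) (hxy : x ≤ y)
    (hx : 0 < denom w z (c * x)) (hy : 0 < denom w z (c * y)) :
    x / denom w z (c * x) ≤ y / denom w z (c * y) := by
  rw [div_le_div_iff₀ hx hy]
  unfold denom
  linear_combination mul_le_mul_of_nonneg_left hxy hwz

section Residual

variable {β ε ρ zh zl : ℝ}

lemma F_eq_meanInv (b r : ℝ) :
    F β ε ρ zh zl b r
      = β * (1 + r) * meanInv ρ ((ε - 1) / ε) zh zl ((1 - β) * (1 + r) * b)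
        - ((ε - 1) / ε)⁻¹ := by
  unfold F meanInv Dh Dl denom
  rw [inv_div]
  ring

lemma F_eq_div_denom (b r : ℝ) :
    F β ε ρ zh zl b r
      = β * ρ * ((1 + r) / denom ((ε - 1) / ε) zh ((1 - β) * b * (1 + r)))
        + β * (1 - ρ) * ((1 + r) / denom ((ε - 1) / ε) zl ((1 - β) * b * (1 + r)))
        - ε / (ε - 1) := by
  unfold F Dh Dl denom
  ring

lemma mul_le_one_of_F_eq_zero (hε : 1 < ε) (hρ0 : 0 ≤ ρ) (hρ1 : ρ ≤ 1)
    (hmean : ρ * zh + (1 - ρ) * zl = 1) {b r : ℝ}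
    (hh : 0 < Dh β ε zh b r) (hl : 0 < Dl β ε zl b r) (hF : F β ε ρ zh zl b r = 0) :
    β * (1 + r) ≤ 1 := by
  have hw : 0 < ((ε - 1) / ε)⁻¹ := inv_pos.2 (div_pos (by linarith) (by linarith))
  have hG := inv_le_meanInv hρ0 hρ1 hmean hh hl
  rw [F_eq_meanInv, sub_eq_zero] at hF
  exact le_of_mul_le_mul_right (by linarith) (hw.trans_le hG)

lemma F_lt_F_of_debt_lt (hβ0 : 0 < β) (hβ1 : β < 1) (hε : 1 < ε) (hρ0 : 0 < ρ)
    (hzl0 : 0 < zl) (hzl1 : zl < 1) (hzh : 1 < zh) (hmean : ρ * zh + (1 - ρ) * zl = 1)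
    {b b' r : ℝ} (hr : 0 < 1 + r) (hb : 0 ≤ b) (hbb' : b < b')
    (hb' : (1 - β) * (1 + r) * b' ≤ (ε - 1) / ε) :
    F β ε ρ zh zl b' r < F β ε ρ zh zl b r := by
  have hw : 0 < (ε - 1) / ε := div_pos (by linarith) (by linarith)
  have hc : 0 < (1 - β) * (1 + r) := mul_pos (by linarith) hr
  have hG := meanInv_strictAntiOn hρ0 hzl0 hzl1 hzh hmean hw
    ⟨mul_nonneg hc.le hb, (mul_le_mul_of_nonneg_left hbb'.le hc.le).trans hb'⟩
    ⟨mul_nonneg hc.le (hb.trans hbb'.le), hb'⟩ (mul_lt_mul_of_pos_left hbb' hc)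
  rw [F_eq_meanInv, F_eq_meanInv]
  gcongr

lemma F_le_F_of_rate_le (hβ : 0 ≤ β) (hρ0 : 0 ≤ ρ) (hρ1 : ρ ≤ 1) (hε : 1 ≤ ε)
    (hzh : 0 ≤ zh) (hzl : 0 ≤ zl) {b r r' : ℝ} (hrr' : r ≤ r')
    (hh : 0 < Dh β ε zh b r) (hl : 0 < Dl β ε zl b r)
    (hh' : 0 < Dh β ε zh b r') (hl' : 0 < Dl β ε zl b r') :
    F β ε ρ zh zl b r ≤ F β ε ρ zh zl b r' := by
  have hw : 0 ≤ (ε - 1) / ε := div_nonneg (by linarith) (by linarith)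
  have hx : 1 + r ≤ 1 + r' := by linarith
  rw [F_eq_div_denom, F_eq_div_denom]
  unfold Dh at hh hh'
  unfold Dl at hl hl'
  gcongr ?_ + ?_ - _
  · exact mul_le_mul_of_nonneg_left (div_denom_le_div_denom (mul_nonneg hw hzh) hx
      (by unfold denom; linarith) (by unfold denom; linarith)) (by positivity)
  · exact mul_le_mul_of_nonneg_left (div_denom_le_div_denom (mul_nonneg hw hzl) hx
      (by unfold denom; linarith) (by unfold denom; linarith))
      (mul_nonneg hβ (by linarith))

end Residual

/-- Proposition 3 (global form): the natural rate of interest is strictly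
increasing in the level of government debt. -/
theorem stmt_14 (β ε ρ zh zl : ℝ)
    (hβ0 : 0 < β) (hβ1 : β < 1) (hε : 1 < ε)
    (hρ0 : 0 < ρ) (hρ1 : ρ < 1)
    (hzl0 : 0 < zl) (hzl1 : zl < 1) (hzh : 1 < zh)
    (hmean : ρ * zh + (1 - ρ) * zl = 1) :
    ∀ b₁ b₂ r₁ r₂ : ℝ,
      0 ≤ b₁ → b₁ < b₂ → b₂ < ((ε - 1) / ε) * (β / (1 - β)) →
      r₁ > -1 → Dh β ε zh b₁ r₁ > 0 → Dl β ε zl b₁ r₁ > 0 →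
      F β ε ρ zh zl b₁ r₁ = 0 →
      r₂ > -1 → Dh β ε zh b₂ r₂ > 0 → Dl β ε zl b₂ r₂ > 0 →
      F β ε ρ zh zl b₂ r₂ = 0 →
      r₁ < r₂ := by
  intro b₁ b₂ r₁ r₂ hb₁ hb₁₂ hb₂ hr₁ hDh₁ hDl₁ hF₁ _ hDh₂ hDl₂ hF₂
  have hw : 0 < (ε - 1) / ε := div_pos (by linarith) (by linarith)
  have hβx₁ : β * (1 + r₁) ≤ 1 := mul_le_one_of_F_eq_zero hε hρ0.le hρ1.le hmean hDh₁ hDl₁ hF₁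
  rw [← mul_div_assoc, lt_div_iff₀ (by linarith)] at hb₂
  have hu₀ : 0 ≤ (1 - β) * (1 + r₁) * b₂ :=
    mul_nonneg (mul_pos (by linarith) (by linarith)).le (by linarith)
  have huw : (1 - β) * (1 + r₁) * b₂ ≤ (ε - 1) / ε := by nlinarith
  have hcross : F β ε ρ zh zl b₂ r₁ < 0 :=
    hF₁ ▸ F_lt_F_of_debt_lt hβ0 hβ1 hε hρ0 hzl0 hzl1 hzh hmean (by linarith) hb₁ hb₁₂ huw
  by_contra! hr
  have := F_le_F_of_rate_le hβ0.le hρ0.le hρ1.le hε.le (by linarith) hzl0.le hr hDh₂ hDl₂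
    (denom_pos hw (by linarith) hu₀ huw) (denom_pos hw hzl0 hu₀ huw)
  linarith
end

section
/- The period-0 equilibrium residual is strictly increasing in inflation at the steady state point: if θ > 0, φ > 0, r* > −1, b̄ ≥ 0, Dh(b̄, r*) > 0 and Dl(b̄, r*) > 0, then the function π ↦ G(b̄, π) has derivative at π = 1 equal to β·ρ·θ·w·zh/Dh(b̄,r*)² + β·(1−ρ)·θ·w·zl/Dl(b̄,r*)² + ε·φ/(ε−1)², and this derivative is strictly positive. (The sign of ∂F^π/∂π₀ in the proof of Proposition 4.) -/
/-- Period-0 equilibrium residual under the Taylor rule: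
G(b,π) = β·ρ·(1+r*+θ(π−1))/Dh(b,r*+θ(π−1)) + β·(1−ρ)·(1+r*+θ(π−1))/Dl(b,r*+θ(π−1))
        − ε/(ε−1+φ(π−1)π). -/
noncomputable def G (β ε ρ zh zl θ φ rstar : ℝ) (b π : ℝ) : ℝ :=
  β * ρ * (1 + rstar + θ * (π - 1)) / Dh β ε zh b (rstar + θ * (π - 1))
    + β * (1 - ρ) * (1 + rstar + θ * (π - 1)) / Dl β ε zl b (rstar + θ * (π - 1))
    - ε / (ε - 1 + φ * (π - 1) * π)

theorem Dl_eq_Dh : Dl = Dh := rfl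

section Derivatives

variable {β ε z b : ℝ}

theorem hasDerivAt_Dh (r : ℝ) :
    HasDerivAt (Dh β ε z b) ((1 - β) * b * (1 - z)) r := by
  have h := (((((hasDerivAt_id r).const_add 1).const_mul (1 - β)).mul_const b).mul_const
    (1 - z)).const_add ((ε - 1) / ε * z)
  simp only [id, mul_one] at h
  exact h

/-- The borrowing term of `Dh` is proportional to `1 + r`, so it cancels in the quotient rule
and only the wage income `w * z` survives in the numerator. -/
theorem hasDerivAt_one_add_div_Dh {r : ℝ} (hD : Dh β ε z b r ≠ 0) :
    HasDerivAt (fun r => (1 + r) / Dh β ε z b r) ((ε - 1) / ε * z / Dh β ε z b r ^ 2) r := by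
  refine (((hasDerivAt_id r).const_add 1).div (hasDerivAt_Dh r) hD).congr_deriv ?_
  congr 1
  simp only [Dh, id]
  ring

theorem hasDerivAt_taylorRule (rstar θ π : ℝ) :
    HasDerivAt (fun π => rstar + θ * (π - 1)) θ π := by
  simpa using (((hasDerivAt_id π).sub_const 1).const_mul θ).const_add rstar

theorem hasDerivAt_rotembergMarkup {ε φ π : ℝ} (h : ε - 1 + φ * (π - 1) * π ≠ 0) :
    HasDerivAt (fun π => ε / (ε - 1 + φ * (π - 1) * π))
      (-(ε * (φ * (2 * π - 1))) / (ε - 1 + φ * (π - 1) * π) ^ 2) π := by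
  have hq : HasDerivAt (fun π => ε - 1 + φ * (π - 1) * π) (φ * (2 * π - 1)) π := by
    have := ((((hasDerivAt_id π).sub_const 1).const_mul φ).mul (hasDerivAt_id π)).const_add
      (ε - 1)
    refine this.congr_deriv ?_
    simp only [id]
    ring
  refine ((hasDerivAt_const π ε).div hq h).congr_deriv ?_
  ring

end Derivatives

theorem G_eq (β ε ρ zh zl θ φ rstar b π : ℝ) :
    G β ε ρ zh zl θ φ rstar b π =
      β * ρ * ((1 + (rstar + θ * (π - 1))) / Dh β ε zh b (rstar + θ * (π - 1)))
        + β * (1 - ρ) * ((1 + (rstar + θ * (π - 1))) / Dh β ε zl b (rstar + θ * (π - 1)))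
        - ε / (ε - 1 + φ * (π - 1) * π) := by
  rw [G, Dl_eq_Dh]
  ring

theorem hasDerivAt_G {β ε ρ zh zl θ φ rstar b π : ℝ}
    (hDh : Dh β ε zh b (rstar + θ * (π - 1)) ≠ 0) (hDl : Dl β ε zl b (rstar + θ * (π - 1)) ≠ 0)
    (hq : ε - 1 + φ * (π - 1) * π ≠ 0) :
    HasDerivAt (G β ε ρ zh zl θ φ rstar b)
      (β * ρ * θ * ((ε - 1) / ε) * zh / Dh β ε zh b (rstar + θ * (π - 1)) ^ 2
        + β * (1 - ρ) * θ * ((ε - 1) / ε) * zl / Dl β ε zl b (rstar + θ * (π - 1)) ^ 2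
        + ε * (φ * (2 * π - 1)) / (ε - 1 + φ * (π - 1) * π) ^ 2) π := by
  rw [Dl_eq_Dh] at hDl ⊢
  have hr := hasDerivAt_taylorRule rstar θ π
  have hh := (hasDerivAt_one_add_div_Dh hDh).comp π hr
  have hl := (hasDerivAt_one_add_div_Dh hDl).comp π hr
  have hG := ((hh.const_mul (β * ρ)).add (hl.const_mul (β * (1 - ρ)))).sub
    (hasDerivAt_rotembergMarkup hq)
  rw [show G β ε ρ zh zl θ φ rstar b = _ from funext (G_eq β ε ρ zh zl θ φ rstar b)]
  refine hG.congr_deriv ?_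
  ring

theorem stmt_17_general (β ε ρ zh zl θ φ rstar : ℝ)
    (hβ0 : 0 < β) (hε : 1 < ε)
    (hρ0 : 0 < ρ) (hρ1 : ρ < 1)
    (hzl0 : 0 < zl) (hzh : 1 < zh)
    (hθ : 0 < θ) (hφ : 0 < φ)
    (bbar : ℝ)
    (hDh : Dh β ε zh bbar rstar > 0) (hDl : Dl β ε zl bbar rstar > 0) :
    HasDerivAt (fun π => G β ε ρ zh zl θ φ rstar bbar π)
      (β * ρ * θ * ((ε - 1) / ε) * zh / (Dh β ε zh bbar rstar) ^ 2
        + β * (1 - ρ) * θ * ((ε - 1) / ε) * zl / (Dl β ε zl bbar rstar) ^ 2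
        + ε * φ / (ε - 1) ^ 2) 1 ∧
    0 < β * ρ * θ * ((ε - 1) / ε) * zh / (Dh β ε zh bbar rstar) ^ 2
        + β * (1 - ρ) * θ * ((ε - 1) / ε) * zl / (Dl β ε zl bbar rstar) ^ 2
        + ε * φ / (ε - 1) ^ 2 := by
  have hε1 : 0 < ε - 1 := sub_pos.2 hε
  have hρ' : 0 < 1 - ρ := sub_pos.2 hρ1
  constructor
  · refine (hasDerivAt_G (ρ := ρ) (θ := θ) (φ := φ) (π := 1)
      (by simpa using hDh.ne') (by simpa using hDl.ne') (by simpa using hε1.ne')).congr_deriv ?_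
    norm_num
  · positivity

/-- Sign of ∂Fᵖⁱ/∂π₀ in the proof of Proposition 4: the period-0 equilibrium
residual π ↦ G(b̄, π) has, at π = 1, the explicit derivative
βρθw·zh/Dh(b̄,r*)² + β(1−ρ)θw·zl/Dl(b̄,r*)² + εφ/(ε−1)², which is strictly
positive. -/
theorem stmt_17 (β ε ρ zh zl θ φ rstar : ℝ)
    (hβ0 : 0 < β) (hβ1 : β < 1) (hε : 1 < ε)
    (hρ0 : 0 < ρ) (hρ1 : ρ < 1)
    (hzl0 : 0 < zl) (hzl1 : zl < 1) (hzh : 1 < zh)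
    (hmean : ρ * zh + (1 - ρ) * zl = 1)
    (hθ : 0 < θ) (hφ : 0 < φ) (hr : rstar > -1)
    (bbar : ℝ) (hb : 0 ≤ bbar)
    (hDh : Dh β ε zh bbar rstar > 0) (hDl : Dl β ε zl bbar rstar > 0) :
    HasDerivAt (fun π => G β ε ρ zh zl θ φ rstar bbar π)
      (β * ρ * θ * ((ε - 1) / ε) * zh / (Dh β ε zh bbar rstar) ^ 2
        + β * (1 - ρ) * θ * ((ε - 1) / ε) * zl / (Dl β ε zl bbar rstar) ^ 2
        + ε * φ / (ε - 1) ^ 2) 1 ∧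
    0 < β * ρ * θ * ((ε - 1) / ε) * zh / (Dh β ε zh bbar rstar) ^ 2
        + β * (1 - ρ) * θ * ((ε - 1) / ε) * zl / (Dl β ε zl bbar rstar) ^ 2
        + ε * φ / (ε - 1) ^ 2 :=
  stmt_17_general β ε ρ zh zl θ φ rstar hβ0 hε hρ0 hρ1 hzl0 hzh hθ hφ bbar hDh hDl
end

section
/- Implicit inflation target of a Taylor rule: (i) for every real π, the identity π*·R* + θ·(π − π*) = π̃·R̃ + θ·(π − π̃) holds with π̃ := π*·(θ − R*)/(θ − R̃); and (ii) if moreover π* > 0 and R* < R̃ < θ, then π̃ > π*. (If the true debt-dependent natural rate R̃ exceeds the intercept-consistent rate R*, a central bank sticking to its Taylor rule de facto operates with a strictly higher implicit inflation target.) -/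
/-!
The implicit target `π̃` is chosen so that `π̃ * (θ - R̃) = π* * (θ - R*)`; expanding both
Taylor rules, this is exactly the equality of their intercepts. If `R* < R̃ < θ`, then
`π̃ / π* = (θ - R*) / (θ - R̃) > 1`.
-/

section ImplicitTarget

variable {K : Type*}

def implicitTarget [Field K] (πstar Rstar Rtilde θ : K) : K :=
  πstar * (θ - Rstar) / (θ - Rtilde)

theorem implicitTarget_mul_sub [Field K] {πstar Rstar Rtilde θ : K} (hθ : θ ≠ Rtilde) :
    implicitTarget πstar Rstar Rtilde θ * (θ - Rtilde) = πstar * (θ - Rstar) :=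
  div_mul_cancel₀ _ (sub_ne_zero.mpr hθ)

theorem taylorRule_eq_implicitTarget [Field K] {πstar Rstar Rtilde θ : K} (hθ : θ ≠ Rtilde)
    (π : K) :
    πstar * Rstar + θ * (π - πstar) =
      implicitTarget πstar Rstar Rtilde θ * Rtilde
        + θ * (π - implicitTarget πstar Rstar Rtilde θ) := by
  linear_combination implicitTarget_mul_sub (πstar := πstar) (Rstar := Rstar) hθ

theorem lt_implicitTarget [Field K] [LinearOrder K] [IsStrictOrderedRing K]
    {πstar Rstar Rtilde θ : K} (hπ : 0 < πstar) (hR : Rstar < Rtilde) (hRθ : Rtilde < θ) :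
    πstar < implicitTarget πstar Rstar Rtilde θ := by
  have hratio : 1 < (θ - Rstar) / (θ - Rtilde) :=
    (one_lt_div (sub_pos.mpr hRθ)).mpr (sub_lt_sub_left hR θ)
  rw [implicitTarget, mul_div_assoc]
  exact lt_mul_of_one_lt_right hπ hratio

end ImplicitTarget

/-- Implicit inflation target of a Taylor rule: (i) the Taylor rule can be
rewritten around the implicit target π̃ = π*·(θ−R*)/(θ−R̃); (ii) if π* > 0 and
R* < R̃ < θ, then π̃ > π*. -/
theorem stmt_19 (πstar Rstar Rtilde θ : ℝ) (hθ : θ ≠ Rtilde) :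
    (∀ π : ℝ,
      πstar * Rstar + θ * (π - πstar)
        = (πstar * (θ - Rstar) / (θ - Rtilde)) * Rtilde
          + θ * (π - πstar * (θ - Rstar) / (θ - Rtilde))) ∧
    (πstar > 0 → Rstar < Rtilde → Rtilde < θ →
      πstar * (θ - Rstar) / (θ - Rtilde) > πstar) :=
  ⟨taylorRule_eq_implicitTarget hθ, fun hπ hR hRθ => lt_implicitTarget hπ hR hRθ⟩
end
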